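/- arXiv:1901.09321 — 4 statements merged into one kernel-verified Lean document; each statement's English description precedes it below -/
import Mathlib

section
/- For every z ∈ ℝ^c and every y ∈ ℝ^c with Σ_i y_i = 1, the function ε ↦ ℓ((1+ε)z, y) is differentiable at ε = 0 with derivative equal to ℓ(z, y) − H(p), where p is the softmax of z. -/
/-- `logsumexp z = log (∑ i, exp (z i))`. -/
noncomputable def logsumexp {c : ℕ} (z : Fin c → ℝ) : ℝ :=
  Real.log (∑ i, Real.exp (z i))

/-- The softmax probabilities of a logit vector `z`. -/
noncomputable def softmax {c : ℕ} (z : Fin c → ℝ) : Fin c → ℝ :=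
  fun i => Real.exp (z i) / ∑ k, Real.exp (z k)

/-- The Shannon entropy `H(p) = -∑ i, p i * log (p i)`. -/
noncomputable def shannonEntropy {c : ℕ} (p : Fin c → ℝ) : ℝ :=
  -∑ i, p i * Real.log (p i)

/-- The cross-entropy loss `ℓ(z, y) = -∑ i, y i * (z i - logsumexp z)`. -/
noncomputable def crossEntropyLoss {c : ℕ} (z y : Fin c → ℝ) : ℝ :=
  -∑ i, y i * (z i - logsumexp z)

/-- For every `z ∈ ℝ^c` and every `y ∈ ℝ^c` with `∑ i, y i = 1`, the function
`ε ↦ ℓ((1+ε)z, y)` is differentiable at `ε = 0` with derivative `ℓ(z, y) − H(p)`,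
where `p` is the softmax of `z`. -/
theorem hasDerivAt_crossEntropy_scaling {c : ℕ} (z y : Fin c → ℝ) (hy : ∑ i, y i = 1) :
    HasDerivAt (fun ε : ℝ => crossEntropyLoss ((1 + ε) • z) y)
      (crossEntropyLoss z y - shannonEntropy (softmax z)) 0 := by
  rcases Nat.eq_zero_or_pos c with hc | hc
  · subst hc; simp at hy
  set S : ℝ := ∑ k, Real.exp (z k) with hS
  have hne : (Finset.univ : Finset (Fin c)).Nonempty := by
    simpa [Finset.univ_nonempty_iff] using Fin.pos_iff_nonempty.mp hc
  have hSpos : 0 < S := Finset.sum_pos (fun i _ => Real.exp_pos _) hne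
  -- derivative of the sum of exponentials
  have hg : HasDerivAt (fun ε : ℝ => ∑ k, Real.exp ((1 + ε) * z k))
      (∑ k, z k * Real.exp (z k)) 0 := by
    apply HasDerivAt.fun_sum
    intro k _
    have h1 : HasDerivAt (fun ε : ℝ => (1 + ε) * z k) (z k) 0 := by
      simpa using ((hasDerivAt_id (0 : ℝ)).const_add 1).mul_const (z k)
    simpa [mul_comm] using h1.exp
  have h0 : ∑ k, Real.exp ((1 + (0:ℝ)) * z k) = S := by simp [hS]
  have hlog : HasDerivAt (fun ε : ℝ => Real.log (∑ k, Real.exp ((1 + ε) * z k)))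
      ((∑ k, z k * Real.exp (z k)) / S) 0 := by
    have := hg.log (by rw [h0]; exact hSpos.ne')
    simpa only [h0] using this
  have hlin : HasDerivAt (fun ε : ℝ => (1 + ε) * ∑ i, y i * z i) (∑ i, y i * z i) 0 := by
    simpa using ((hasDerivAt_id (0 : ℝ)).const_add 1).mul_const (∑ i, y i * z i)
  have h := hlog.sub hlin
  -- rewrite the loss function
  have hfun : (fun ε : ℝ => crossEntropyLoss ((1 + ε) • z) y) =
      fun ε : ℝ => Real.log (∑ k, Real.exp ((1 + ε) * z k)) - (1 + ε) * ∑ i, y i * z i := by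
    funext ε
    simp only [crossEntropyLoss, logsumexp, Pi.smul_apply, smul_eq_mul]
    set L : ℝ := Real.log (∑ k, Real.exp ((1 + ε) * z k)) with hL
    have : ∀ i ∈ Finset.univ, y i * ((1 + ε) * z i - L)
        = y i * ((1 + ε) * z i) - y i * L := fun i _ => mul_sub _ _ _
    rw [Finset.sum_congr rfl this, Finset.sum_sub_distrib, ← Finset.sum_mul, hy]
    have : ∑ i, y i * ((1 + ε) * z i) = (1 + ε) * ∑ i, y i * z i := by
      rw [Finset.mul_sum]; apply Finset.sum_congr rfl; intro i _; ring
    rw [this]; ring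
  -- the derivative value
  have hval : crossEntropyLoss z y - shannonEntropy (softmax z)
      = (∑ k, z k * Real.exp (z k)) / S - ∑ i, y i * z i := by
    have hlogp : ∀ i, Real.log (Real.exp (z i) / S) = z i - Real.log S := by
      intro i
      rw [Real.log_div (Real.exp_ne_zero _) hSpos.ne', Real.log_exp]
    have hH : ∑ i, (Real.exp (z i) / S) * Real.log (Real.exp (z i) / S)
        = (∑ k, z k * Real.exp (z k)) / S - Real.log S := by
      have : ∀ i ∈ Finset.univ, (Real.exp (z i) / S) * Real.log (Real.exp (z i) / S)
          = z i * Real.exp (z i) / S - Real.log S * (Real.exp (z i) / S) := by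
        intro i _; rw [hlogp i]; ring
      rw [Finset.sum_congr rfl this, Finset.sum_sub_distrib, ← Finset.sum_div,
        ← Finset.mul_sum, ← Finset.sum_div, ← hS, div_self hSpos.ne', mul_one]
    have hCE : crossEntropyLoss z y = Real.log S - ∑ i, y i * z i := by
      simp only [crossEntropyLoss, logsumexp, ← hS]
      have : ∀ i ∈ Finset.univ, y i * (z i - Real.log S)
          = y i * z i - y i * Real.log S := fun i _ => mul_sub _ _ _
      rw [Finset.sum_congr rfl this, Finset.sum_sub_distrib, ← Finset.sum_mul, hy]
      ring
    simp only [shannonEntropy, softmax, ← hS, hH, hCE]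
    ring
  rw [hfun, hval]
  exact h
end

section
/- Let z and y be random vectors in ℝ^c on a probability space such that z is integrable with E[z] = 0, y is integrable and independent of z, and almost surely y_i ≥ 0 for all i and Σ_i y_i = 1. Assume ℓ(z,y) and max_i z_i are integrable. Then E[ℓ(z, y)] ≥ E[max_{i∈[c]} z_i]. -/
open MeasureTheory ProbabilityTheory

/-- If `z` and `y` are independent random vectors in `ℝ^c`, `z` integrable with mean
zero, and `y` almost surely a probability vector, then `E[ℓ(z, y)] ≥ E[max_i z_i]`
(assuming the stated integrability). -/
theorem expected_crossEntropy_ge_expected_max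
    {Ω : Type*} [MeasureSpace Ω] [IsProbabilityMeasure (volume : Measure Ω)]
    {c : ℕ} (hc : 0 < c) (z y : Ω → Fin c → ℝ)
    (hz : Integrable z) (hzmean : (∫ ω, z ω) = 0)
    (hy : Integrable y) (hindep : IndepFun z y)
    (hprob : ∀ᵐ ω ∂volume, (∀ i, 0 ≤ y ω i) ∧ ∑ i, y ω i = 1)
    (hint₁ : Integrable (fun ω => crossEntropyLoss (z ω) (y ω)))
    (hint₂ : Integrable (fun ω => ⨆ i, z ω i)) :
    (∫ ω, crossEntropyLoss (z ω) (y ω)) ≥ ∫ ω, ⨆ i, z ω i := by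
  haveI : Nonempty (Fin c) := ⟨⟨0, hc⟩⟩
  have hzi : ∀ i, Integrable (fun ω => z ω i) := fun i =>
    (ContinuousLinearMap.proj (R := ℝ) (φ := fun _ : Fin c => ℝ) i).integrable_comp hz
  have hyi : ∀ i, Integrable (fun ω => y ω i) := fun i =>
    (ContinuousLinearMap.proj (R := ℝ) (φ := fun _ : Fin c => ℝ) i).integrable_comp hy
  have hzmi : ∀ i, (∫ ω, z ω i) = 0 := by
    intro i
    have h := (ContinuousLinearMap.proj (R := ℝ) (φ := fun _ : Fin c => ℝ) i).integral_comp_comm hz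
    simpa [hzmean] using h
  have hind_i : ∀ i, IndepFun (fun ω => y ω i) (fun ω => z ω i) := fun i =>
    (hindep.symm).comp (measurable_pi_apply i) (measurable_pi_apply i)
  have hmul : ∀ i, Integrable (fun ω => y ω i * z ω i) := fun i =>
    (hind_i i).integrable_mul (hyi i) (hzi i)
  have hmul0 : ∀ i, (∫ ω, y ω i * z ω i) = 0 := by
    intro i
    have := (hind_i i).integral_mul_eq_mul_integral (hyi i).aestronglyMeasurable (hzi i).aestronglyMeasurable
    rw [show (fun ω => y ω i * z ω i) = ((fun ω => y ω i) * fun ω => z ω i) from rfl,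
      this, hzmi i, mul_zero]
  have hS : Integrable (fun ω => ∑ i, y ω i * z ω i) :=
    integrable_finset_sum _ (fun i _ => hmul i)
  have hpt : ∀ᵐ ω ∂(volume : Measure Ω),
      (⨆ i, z ω i) - ∑ i, y ω i * z ω i ≤ crossEntropyLoss (z ω) (y ω) := by
    filter_upwards [hprob] with ω h
    obtain ⟨hpos, hsum⟩ := h
    have hexp_pos : 0 < ∑ i, Real.exp (z ω i) :=
      Finset.sum_pos (fun i _ => Real.exp_pos _) Finset.univ_nonempty
    have hLSE : ∀ j, z ω j ≤ logsumexp (z ω) := by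
      intro j
      rw [logsumexp, Real.le_log_iff_exp_le hexp_pos]
      exact Finset.single_le_sum (fun i _ => (Real.exp_pos _).le) (Finset.mem_univ j)
    have hsup : (⨆ i, z ω i) ≤ logsumexp (z ω) := ciSup_le hLSE
    have hrw : crossEntropyLoss (z ω) (y ω)
        = logsumexp (z ω) - ∑ i, y ω i * z ω i := by
      rw [crossEntropyLoss]
      have : ∑ i, y ω i * (z ω i - logsumexp (z ω))
          = (∑ i, y ω i * z ω i) - (∑ i, y ω i) * logsumexp (z ω) := by
        rw [Finset.sum_mul, ← Finset.sum_sub_distrib]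
        exact Finset.sum_congr rfl (fun i _ => by ring)
      rw [this, hsum]; ring
    rw [hrw]
    linarith
  have hle : ∫ ω, ((⨆ i, z ω i) - ∑ i, y ω i * z ω i)
      ≤ ∫ ω, crossEntropyLoss (z ω) (y ω) :=
    integral_mono_ae (hint₂.sub hS) hint₁ hpt
  have heq : ∫ ω, ((⨆ i, z ω i) - ∑ i, y ω i * z ω i) = ∫ ω, ⨆ i, z ω i := by
    rw [integral_sub hint₂ hS, integral_finset_sum _ (fun i _ => hmul i)]
    simp [hmul0]
  rw [heq] at hle
  exact hle
end

section
/- (Theorem 2, second part, core bound.) Let z and y be random vectors in ℝ^c (c ≥ 1) on a probability space such that z is integrable with E[z] = 0, y is integrable and independent of z, and almost surely y_i ≥ 0 for all i and Σ_i y_i = 1. Assume ℓ(z,y), H(p) and max_i z_i are integrable, where p denotes the softmax of z. Then E[ℓ(z, y) − H(p)] ≥ E[max_{i∈[c]} z_i] − log c. -/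
open MeasureTheory ProbabilityTheory

section aux

variable {c : ℕ}

lemma sum_exp_pos (hc : 1 ≤ c) (z : Fin c → ℝ) : 0 < ∑ k, Real.exp (z k) := by
  haveI : Nonempty (Fin c) := Fin.pos_iff_nonempty.mp hc
  exact Finset.sum_pos (fun i _ => Real.exp_pos _) Finset.univ_nonempty

lemma softmax_pos (hc : 1 ≤ c) (z : Fin c → ℝ) (i : Fin c) : 0 < softmax z i :=
  div_pos (Real.exp_pos _) (sum_exp_pos hc z)

lemma softmax_sum (hc : 1 ≤ c) (z : Fin c → ℝ) : ∑ i, softmax z i = 1 := by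
  simp only [softmax, ← Finset.sum_div]
  exact div_self (sum_exp_pos hc z).ne'

lemma log_softmax (hc : 1 ≤ c) (z : Fin c → ℝ) (i : Fin c) :
    Real.log (softmax z i) = z i - logsumexp z := by
  rw [softmax, Real.log_div (Real.exp_pos _).ne' (sum_exp_pos hc z).ne', Real.log_exp,
    logsumexp]

/-- `H(softmax z) = logsumexp z - ∑ p i * z i`. -/
lemma shannonEntropy_softmax_eq (hc : 1 ≤ c) (z : Fin c → ℝ) :
    shannonEntropy (softmax z) = logsumexp z - ∑ i, softmax z i * z i := by
  have h : ∀ i ∈ Finset.univ, softmax z i * Real.log (softmax z i)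
      = softmax z i * z i - softmax z i * logsumexp z := by
    intro i _
    rw [log_softmax hc z i]; ring
  rw [shannonEntropy, Finset.sum_congr rfl h, Finset.sum_sub_distrib,
    ← Finset.sum_mul, softmax_sum hc z]
  ring

/-- Entropy of softmax is at most `log c`. -/
lemma shannonEntropy_softmax_le (hc : 1 ≤ c) (z : Fin c → ℝ) :
    shannonEntropy (softmax z) ≤ Real.log c := by
  have hppos := softmax_pos hc z
  have hJ := strictConcaveOn_log_Ioi.concaveOn.le_map_sum (t := Finset.univ)
    (w := softmax z) (p := fun i => (softmax z i)⁻¹)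
    (fun i _ => (hppos i).le) (softmax_sum hc z)
    (fun i _ => Set.mem_Ioi.mpr (inv_pos.mpr (hppos i)))
  simp only [smul_eq_mul] at hJ
  have hsum : ∑ i, softmax z i * (softmax z i)⁻¹ = (c : ℝ) := by
    have h : ∀ i ∈ Finset.univ, softmax z i * (softmax z i)⁻¹ = (1 : ℝ) := by
      intro i _; exact mul_inv_cancel₀ (hppos i).ne'
    rw [Finset.sum_congr rfl h]
    simp
  rw [hsum] at hJ
  have heq : shannonEntropy (softmax z) = ∑ i, softmax z i * Real.log ((softmax z i)⁻¹) := by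
    simp [shannonEntropy, Real.log_inv, mul_neg]
  rw [heq]
  exact hJ

/-- The key pointwise bound. -/
lemma key_bound (hc : 1 ≤ c) (z : Fin c → ℝ) :
    (⨆ i, z i) - Real.log c ≤ ∑ i, softmax z i * z i := by
  haveI : Nonempty (Fin c) := Fin.pos_iff_nonempty.mp hc
  have hsup : (⨆ i, z i) ≤ logsumexp z := by
    refine ciSup_le fun i => ?_
    rw [logsumexp]
    exact (Real.le_log_iff_exp_le (sum_exp_pos hc z)).mpr
      (Finset.single_le_sum (fun k _ => (Real.exp_pos (z k)).le) (Finset.mem_univ i))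
  have h1 := shannonEntropy_softmax_le hc z
  rw [shannonEntropy_softmax_eq hc z] at h1
  linarith

end aux

/-- **Theorem 2, second part (core bound).** If `z` and `y` are independent random
vectors in `ℝ^c` (`c ≥ 1`), `z` integrable with mean zero, `y` almost surely a
probability vector, then `E[ℓ(z, y) − H(p)] ≥ E[max_i z_i] − log c`, where `p` is
the softmax of `z` (assuming the stated integrability). -/
theorem expected_loss_sub_entropy_ge
    {Ω : Type*} [MeasureSpace Ω] [IsProbabilityMeasure (volume : Measure Ω)]
    {c : ℕ} (hc : 1 ≤ c) (z y : Ω → Fin c → ℝ)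
    (hz : Integrable z) (hzmean : (∫ ω, z ω) = 0)
    (hy : Integrable y) (hindep : IndepFun z y)
    (hprob : ∀ᵐ ω ∂volume, (∀ i, 0 ≤ y ω i) ∧ ∑ i, y ω i = 1)
    (hint₁ : Integrable (fun ω => crossEntropyLoss (z ω) (y ω)))
    (hint₂ : Integrable (fun ω => shannonEntropy (softmax (z ω))))
    (hint₃ : Integrable (fun ω => ⨆ i, z ω i)) :
    (∫ ω, (crossEntropyLoss (z ω) (y ω) - shannonEntropy (softmax (z ω)))) ≥
      (∫ ω, ⨆ i, z ω i) - Real.log c := by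
  haveI : Nonempty (Fin c) := Fin.pos_iff_nonempty.mp hc
  set g : Ω → ℝ := fun ω => ∑ i, softmax (z ω) i * z ω i with hg_def
  set h : Ω → ℝ := fun ω => ∑ i, y ω i * z ω i with hh_def
  -- a.e. identity: ℓ - H = g - h
  have hae : ∀ᵐ ω ∂volume,
      crossEntropyLoss (z ω) (y ω) - shannonEntropy (softmax (z ω)) = g ω - h ω := by
    filter_upwards [hprob] with ω hω
    have hce : crossEntropyLoss (z ω) (y ω) = logsumexp (z ω) - h ω := by
      have hsplit : ∀ i ∈ Finset.univ,
          y ω i * (z ω i - logsumexp (z ω)) = y ω i * z ω i - y ω i * logsumexp (z ω) := by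
        intro i _; ring
      rw [crossEntropyLoss, Finset.sum_congr rfl hsplit, Finset.sum_sub_distrib,
        ← Finset.sum_mul, hω.2, hh_def]
      ring
    rw [hce, shannonEntropy_softmax_eq hc (z ω), hg_def]
    ring
  -- measurability and integrability of g
  have hGc : Continuous (fun v : Fin c → ℝ => ∑ i, softmax v i * v i) := by
    refine continuous_finset_sum _ fun i _ => ?_
    have hden : Continuous fun v : Fin c → ℝ => ∑ k, Real.exp (v k) :=
      continuous_finset_sum _ fun k _ => Real.continuous_exp.comp (continuous_apply k)
    exact ((Real.continuous_exp.comp (continuous_apply i)).div hden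
      (fun v => (sum_exp_pos hc v).ne')).mul (continuous_apply i)
  have hgm : AEStronglyMeasurable g volume :=
    hGc.comp_aestronglyMeasurable hz.aestronglyMeasurable
  have hg : Integrable g := by
    refine Integrable.mono' hz.norm hgm (Filter.Eventually.of_forall fun ω => ?_)
    calc ‖g ω‖ ≤ ∑ i, ‖softmax (z ω) i * z ω i‖ := norm_sum_le _ _
      _ ≤ ∑ i, softmax (z ω) i * ‖z ω‖ := by
          refine Finset.sum_le_sum fun i _ => ?_
          rw [norm_mul, Real.norm_of_nonneg (softmax_pos hc _ i).le]
          exact mul_le_mul_of_nonneg_left (norm_le_pi_norm (z ω) i) (softmax_pos hc _ i).le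
      _ = ‖z ω‖ := by rw [← Finset.sum_mul, softmax_sum hc, one_mul]
  -- integrability of h
  have hh : Integrable h := by
    have heq : h =ᵐ[volume] fun ω =>
        g ω - (crossEntropyLoss (z ω) (y ω) - shannonEntropy (softmax (z ω))) := by
      filter_upwards [hae] with ω hω
      linarith
    exact (hg.sub (hint₁.sub hint₂)).congr heq.symm
  -- components
  have hzi : ∀ i, Integrable (fun ω => z ω i) := fun i =>
    (ContinuousLinearMap.proj (R := ℝ) (φ := fun _ : Fin c => ℝ) i).integrable_comp hz
  have hyi : ∀ i, Integrable (fun ω => y ω i) := fun i =>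
    (ContinuousLinearMap.proj (R := ℝ) (φ := fun _ : Fin c => ℝ) i).integrable_comp hy
  have hzimean : ∀ i, (∫ ω, z ω i) = 0 := by
    intro i
    have hcomm :=
      (ContinuousLinearMap.proj (R := ℝ) (φ := fun _ : Fin c => ℝ) i).integral_comp_comm hz
    simpa [hzmean] using hcomm
  -- E[h] = 0
  have hinth : ∫ ω, h ω = 0 := by
    have hterm : ∀ i ∈ Finset.univ, Integrable (fun ω => y ω i * z ω i) := by
      intro i _
      have hiFun : IndepFun (fun ω => y ω i) (fun ω => z ω i) volume :=
        (hindep.comp (measurable_pi_apply i) (measurable_pi_apply i)).symm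
      exact hiFun.integrable_mul (hyi i) (hzi i)
    rw [hh_def]
    rw [integral_finset_sum _ hterm]
    refine Finset.sum_eq_zero fun i _ => ?_
    have hiFun : IndepFun (fun ω => y ω i) (fun ω => z ω i) volume :=
      (hindep.comp (measurable_pi_apply i) (measurable_pi_apply i)).symm
    have hmul := hiFun.integral_fun_mul_eq_mul_integral (hyi i).aestronglyMeasurable (hzi i).aestronglyMeasurable
    rw [hmul, hzimean i, mul_zero]
  -- conclude
  rw [ge_iff_le, integral_congr_ae hae, integral_sub hg hh, hinth, sub_zero]
  have hmono : (∫ ω, ((⨆ i, z ω i) - Real.log c)) ≤ ∫ ω, g ω :=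
    integral_mono (hint₃.sub (integrable_const _)) hg (fun ω => key_bound hc (z ω))
  rwa [integral_sub hint₃ (integrable_const _), integral_const, probReal_univ,
    one_smul] at hmono
end

section
/- (Theorem 4 quantitative form.) Let m ≥ 1, a_1, …, a_m ≥ 0, x ≥ 0, g > 0, set p_i := (∏_{k≠i} a_k)·x for each i, and let j be an index with a_j = min_k a_k. Then the function η ↦ (∏_{i=1}^m (a_i − η·g·p_i))·x is differentiable at η = 0 with a derivative d satisfying g·p_j² ≤ −d ≤ m·g·p_j². In particular, the first-order magnitude of the one-step SGD update to the branch output is, up to a factor m, exactly g·((∏_{k≠j} a_k)·x)². -/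
open Finset

/-- **Theorem 4, quantitative form.** For a scalar branch with nonnegative parameters
`a i`, input `x ≥ 0` and upstream gradient `g > 0`, with sensitivities
`p i = (∏ k ≠ i, a k) * x`, and `j` an index attaining the minimum of the `a k`, the
one-step SGD output map `η ↦ (∏ i, (a i - η * g * p i)) * x` is differentiable at
`η = 0` with derivative `d` satisfying `g * (p j)^2 ≤ -d ≤ m * g * (p j)^2`. -/
theorem scalar_branch_update_bounds {m : ℕ} (hm : 1 ≤ m)
    (a : Fin m → ℝ) (ha : ∀ i, 0 ≤ a i) (x : ℝ) (hx : 0 ≤ x) (g : ℝ) (hg : 0 < g)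
    (p : Fin m → ℝ) (hp : ∀ i, p i = (∏ k ∈ Finset.univ.erase i, a k) * x)
    (j : Fin m) (hj : ∀ k, a j ≤ a k) :
    ∃ d : ℝ,
      HasDerivAt (fun η : ℝ => (∏ i, (a i - η * g * p i)) * x) d 0 ∧
      g * p j ^ 2 ≤ -d ∧ -d ≤ m * g * p j ^ 2 := by
  have hp0 : ∀ i, 0 ≤ p i := by
    intro i
    rw [hp i]
    exact mul_nonneg (Finset.prod_nonneg fun k _ => ha k) hx
  have hple : ∀ i, p i ≤ p j := by
    intro i
    rcases eq_or_ne i j with rfl | hij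
    · exact le_rfl
    · rw [hp i, hp j]
      refine mul_le_mul_of_nonneg_right ?_ hx
      have hji : j ∈ Finset.univ.erase i := Finset.mem_erase.2 ⟨(Ne.symm hij), Finset.mem_univ _⟩
      have hij' : i ∈ Finset.univ.erase j := Finset.mem_erase.2 ⟨hij, Finset.mem_univ _⟩
      rw [← Finset.prod_erase_mul _ _ hji, ← Finset.prod_erase_mul _ _ hij']
      have : (Finset.univ.erase i).erase j = (Finset.univ.erase j).erase i := by
        rw [Finset.erase_right_comm]
      rw [this]
      exact mul_le_mul_of_nonneg_left (hj i)
        (Finset.prod_nonneg fun k _ => ha k)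
  -- derivative of each factor
  have hfac : ∀ i ∈ (Finset.univ : Finset (Fin m)),
      HasDerivAt (fun η : ℝ => a i - η * g * p i) (-(g * p i)) 0 := by
    intro i _
    have h1 : HasDerivAt (fun η : ℝ => η * (g * p i)) (g * p i) 0 := by
      simpa using (hasDerivAt_id (0:ℝ)).mul_const (g * p i)
    have h2 := (hasDerivAt_const (0:ℝ) (a i)).fun_sub h1
    simpa [mul_assoc, zero_sub] using h2
  have hprod := HasDerivAt.fun_finsetProd hfac
  have hmain := hprod.mul_const x
  have hdval : -((∑ i, (∏ k ∈ Finset.univ.erase i, (a k - 0 * g * p k)) • (-(g * p i))) * x)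
      = g * ∑ i, p i ^ 2 := by
    simp only [zero_mul, sub_zero, smul_eq_mul, mul_neg, Finset.sum_neg_distrib, neg_mul, neg_neg]
    rw [Finset.sum_mul, Finset.mul_sum]
    congr 1; ext i
    rw [hp i]; ring
  refine ⟨_, hmain, ?_, ?_⟩
  · rw [hdval]
    have : p j ^ 2 ≤ ∑ i, p i ^ 2 :=
      Finset.single_le_sum (f := fun i => p i ^ 2) (fun i _ => sq_nonneg _) (Finset.mem_univ j)
    nlinarith
  · rw [hdval]
    have hsum : ∑ i, p i ^ 2 ≤ ∑ _i : Fin m, p j ^ 2 := by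
      apply Finset.sum_le_sum
      intro i _
      exact pow_le_pow_left₀ (hp0 i) (hple i) 2
    simp only [Finset.sum_const, Finset.card_univ, Fintype.card_fin, nsmul_eq_mul] at hsum
    nlinarith
end
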